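/- arXiv:1302.1488 — 2 statements merged into one kernel-verified Lean document; each statement's English description precedes it below -/
import Mathlib

section
/- With the forcing conditions of the previous statement (finite χᵖ, finite Iᵖ, Vᵖ with realization and coherence on ℕ), suppose p₀ ⪰ p₁ ⪰ ⋯ is a decreasing sequence meeting every Dᵢ (i ∈ ℕ). Define νᵖ ⊇ χᵖ by additionally setting νᵖ(i,s) = χᵖ(i,s') for i ∈ Iᵖ, s ≥ Vᵖ(i), where s' ≥ Vᵖ(i) is any point where χᵖ(i,·) is defined. Let S = {x : ∃j, ν^{pⱼ}(x) = 1}. Then S is convergent and lim S = W. -/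
open Classical

/-- A forcing condition `p = (χᵖ, Iᵖ, Vᵖ)` with realization and coherence. -/
structure Cond where
  χ : ℕ × ℕ → Option Bool
  finite : Set.Finite {x : ℕ × ℕ | χ x ≠ none}
  I : Finset ℕ
  V : ℕ → ℕ
  real : ∀ i ∈ I, ∃ s, V i ≤ s ∧ χ (i, s) ≠ none
  coh : ∀ i ∈ I, ∀ s s', V i ≤ s → V i ≤ s' →
    ∀ b b', χ (i, s) = some b → χ (i, s') = some b' → b = b'

/-- `q ⪯ p`: `q` extends `p`. -/
def Cond.le (q p : Cond) : Prop :=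
  (∀ x b, p.χ x = some b → q.χ x = some b) ∧ p.I ⊆ q.I ∧ ∀ i ∈ p.I, q.V i = p.V i

/-- The dense set `Dᵢ` for a fixed `W ⊆ ℕ`. -/
def Dset (W : Set ℕ) (i : ℕ) : Set Cond :=
  {q | i ∈ q.I ∧ ∃ s, q.V i ≤ s ∧ ∃ b, q.χ (i, s) = some b ∧ (b = true ↔ i ∈ W)}

/-- `νᵖ(i,s) = 1`: either `χᵖ(i,s) = 1`, or `i ∈ Iᵖ`, `s ≥ Vᵖ(i)` and the (by
coherence, unique) stable value of the column `i` is `1`. -/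
def nuOne (p : Cond) : ℕ × ℕ → Prop := fun x =>
  p.χ x = some true ∨
    (x.1 ∈ p.I ∧ p.V x.1 ≤ x.2 ∧ ∃ s', p.V x.1 ≤ s' ∧ p.χ (x.1, s') = some true)

/-- if `p₀ ⪰ p₁ ⪰ ⋯` is a decreasing sequence of conditions meeting
every `Dᵢ`, then `S = {x | ∃j, ν^{pⱼ}(x) = 1}` is convergent and `lim S = W`. -/
theorem stmt11 (W : Set ℕ) (p : ℕ → Cond)
    (hdec : ∀ j, (p (j + 1)).le (p j))
    (hmeet : ∀ i : ℕ, ∃ j, p j ∈ Dset W i) :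
    (∀ i : ℕ, ∃ m : ℕ, ∀ m' ≥ m,
        ((i, m') ∈ {x | ∃ j, nuOne (p j) x} ↔ (i, m) ∈ {x | ∃ j, nuOne (p j) x})) ∧
    {i : ℕ | ∃ m : ℕ, ∀ m' ≥ m, (i, m') ∈ {x | ∃ j, nuOne (p j) x}} = W := by
  -- monotonicity of the chain
  have hle : ∀ j k, j ≤ k → (p k).le (p j) := by
    intro j k hjk
    induction hjk with
    | refl => exact ⟨fun x b h => h, Finset.Subset.refl _, fun i _ => rfl⟩
    | @step m h ih =>
      exact ⟨fun x b hb => (hdec m).1 x b (ih.1 x b hb),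
        ih.2.1.trans (hdec m).2.1,
        fun i hi => ((hdec m).2.2 i (ih.2.1 hi)).trans (ih.2.2 i hi)⟩
  -- key claim
  have key : ∀ i : ℕ, ∃ m : ℕ, ∀ m' ≥ m,
      ((i, m') ∈ {x | ∃ j, nuOne (p j) x} ↔ i ∈ W) := by
    intro i
    obtain ⟨j, hjI, s, hs, b, hχ, hb⟩ := hmeet i
    refine ⟨(p j).V i, fun m' hm' => ?_⟩
    constructor
    · rintro ⟨j', hnu⟩
      set k := max j j' with hk
      have hkj : (p k).le (p j) := hle j k (le_max_left _ _)
      have hkj' : (p k).le (p j') := hle j' k (le_max_right _ _)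
      have hIk : i ∈ (p k).I := hkj.2.1 hjI
      have hVk : (p k).V i = (p j).V i := hkj.2.2 i hjI
      have hχk : (p k).χ (i, s) = some b := hkj.1 _ b hχ
      rcases hnu with h1 | ⟨hI', hV', s', hs', hχ'⟩
      · -- χ^{pj'}(i,m') = true
        have h2 : (p k).χ (i, m') = some true := hkj'.1 _ true h1
        have := (p k).coh i hIk s m' (hVk ▸ hs) (hVk ▸ hm') b true hχk h2
        exact hb.mp this
      · have hVk' : (p k).V i = (p j').V i := hkj'.2.2 i hI'
        have h2 : (p k).χ (i, s') = some true := hkj'.1 _ true hχ'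
        have := (p k).coh i hIk s s' (hVk ▸ hs) (hVk' ▸ hs') b true hχk h2
        exact hb.mp this
    · intro hiW
      exact ⟨j, Or.inr ⟨hjI, hm', s, hs, by rwa [hb.mpr hiW] at hχ⟩⟩
  constructor
  · intro i
    obtain ⟨m, hm⟩ := key i
    exact ⟨m, fun m' hm' => (hm m' hm').trans (hm m le_rfl).symm⟩
  · ext i
    obtain ⟨m, hm⟩ := key i
    constructor
    · rintro ⟨m₀, hm₀⟩
      exact (hm (max m m₀) (le_max_left _ _)).mp (hm₀ _ (le_max_right _ _))
    · intro hiW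
      exact ⟨m, fun m' hm' => (hm m' hm').mpr hiW⟩
end

section
/- With the general condition structure (χᵖ, {Iᵖᵢ}ᵢ≤ₙ, {Vᵖᵢ}ᵢ≤ₙ) satisfying realization and coherence, suppose q ⪯ᵢ p (q extends p without changing Iⱼ, Vⱼ for j > i) and r ⪯ p satisfies r↾_{i+1} p = p (r agrees with p on levels ≤ i+1 and on χ). Then the amalgam q ∪ r — defined by χ^{q∪r} = χ^q, I^{q∪r}ⱼ = I^qⱼ for j ≤ i and I^{q∪r}ⱼ = I^rⱼ for j > i (and correspondingly for V) — is again a condition, i.e., satisfies realization and coherence. -/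
/-- The initial segment `[s_n, s_{n-1}, …, s_i]` of the sequence `(s_n, …, s_0)`. -/
def seg (s : ℕ → ℕ) (n i : ℕ) : List ℕ :=
  (List.range (n + 1 - i)).map fun k => s (n - k)

/-- `(s_n, …, s_0)` is convergent from `m` relative to `(I, V)`. -/
def ConvFrom (n : ℕ) (I : ℕ → Set (List ℕ)) (V : ℕ → List ℕ → ℕ)
    (s : ℕ → ℕ) (m : ℕ) : Prop :=
  ∀ i ≤ m, seg s n (i + 1) ∈ I (i + 1) ∧ V (i + 1) (seg s n (i + 1)) ≤ s i

/-- A general forcing condition with realization and coherence. -/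
structure GCond (n : ℕ) where
  χ : List ℕ → Option Bool
  I : ℕ → Set (List ℕ)
  V : ℕ → List ℕ → ℕ
  real : ∀ i, 1 < i → i ≤ n → ∀ t ∈ I i, ∃ s, V i t ≤ s ∧ t ++ [s] ∈ I (i - 1)
  real1 : ∀ t ∈ I 1, ∃ s, V 1 t ≤ s ∧ χ (t ++ [s]) ≠ none
  coh : ∀ m < n, ∀ s t : ℕ → ℕ, (∀ j, m + 1 ≤ j → j ≤ n → s j = t j) →
    ConvFrom n I V s m → ConvFrom n I V t m →
    ∀ b b', χ (seg s n 0) = some b → χ (seg t n 0) = some b' → b = b'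

/-- `q ⪯ p`: `q` extends `p` (χ extended, index sets enlarged, V-values preserved). -/
def GCond.le {n : ℕ} (q p : GCond n) : Prop :=
  (∀ x b, p.χ x = some b → q.χ x = some b) ∧
    ∀ j, 1 ≤ j → j ≤ n → p.I j ⊆ q.I j ∧ ∀ t ∈ p.I j, q.V j t = p.V j t

/-- `q ⪯ᵢ p`: `q ⪯ p` and `q` agrees with `p` at all levels `j > i`. -/
def GCond.leAt {n : ℕ} (q p : GCond n) (i : ℕ) : Prop :=
  q.le p ∧ ∀ j, i < j → j ≤ n → q.I j = p.I j ∧ q.V j = p.V j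

lemma seg_congr {s t : ℕ → ℕ} {n i : ℕ} (h : ∀ j, i ≤ j → s j = t j) :
    seg s n i = seg t n i := by
  unfold seg
  apply List.map_congr_left
  intro k hk
  rw [List.mem_range] at hk
  exact h _ (by omega)

lemma seg_succ {s : ℕ → ℕ} {n i : ℕ} (h : i ≤ n) :
    seg s n i = seg s n (i+1) ++ [s i] := by
  unfold seg
  have h1 : n + 1 - i = (n + 1 - (i+1)) + 1 := by omega
  rw [h1, List.range_succ, List.map_append]
  simp only [List.map_cons, List.map_nil]
  have h2 : n - (n + 1 - (i+1)) = i := by omega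
  rw [h2]

/-- Descent: from a member of `I (i+1)`, realize downward through all levels to get a
sequence convergent from `i` on which `χ` is defined. -/
lemma descent {n : ℕ} (p : GCond n) :
    ∀ i, i + 1 ≤ n → ∀ s : ℕ → ℕ, seg s n (i+1) ∈ p.I (i+1) →
    ∃ s' : ℕ → ℕ, (∀ j, i + 1 ≤ j → s' j = s j) ∧ ConvFrom n p.I p.V s' i ∧
      ∃ b, p.χ (seg s' n 0) = some b := by
  intro i
  induction i with
  | zero =>
    intro hn s hs
    obtain ⟨a, ha1, ha2⟩ := p.real1 _ hs
    refine ⟨Function.update s 0 a, ?_, ?_, ?_⟩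
    · intro j hj; exact Function.update_of_ne (by omega) _ _
    · intro i' hi'
      have hz : i' = 0 := by omega
      subst hz
      have hseg : seg (Function.update s 0 a) n 1 = seg s n 1 :=
        seg_congr fun j hj => Function.update_of_ne (by omega) _ _
      rw [hseg]
      exact ⟨hs, by simpa using ha1⟩
    · have hseg : seg (Function.update s 0 a) n 0 = seg s n 1 ++ [a] := by
        rw [seg_succ (by omega : 0 ≤ n), Function.update_self,
          seg_congr (t := s) fun j hj => Function.update_of_ne (by omega) _ _]
      rw [hseg]
      exact Option.ne_none_iff_exists'.mp ha2
  | succ i ih =>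
    intro hn s hs
    obtain ⟨a, ha1, ha2⟩ := p.real (i+2) (by omega) hn _ hs
    have hagree : ∀ j, i + 2 ≤ j → Function.update s (i+1) a j = s j :=
      fun j hj => Function.update_of_ne (by omega) _ _
    have hseg2 : seg (Function.update s (i+1) a) n (i+2) = seg s n (i+2) := seg_congr hagree
    have hseg1 : seg (Function.update s (i+1) a) n (i+1) ∈ p.I (i+1) := by
      rw [seg_succ (by omega : i + 1 ≤ n), hseg2, Function.update_self]
      simpa using ha2
    obtain ⟨s', hs'1, hs'2, hs'3⟩ := ih (by omega) _ hseg1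
    refine ⟨s', ?_, ?_, hs'3⟩
    · intro j hj; rw [hs'1 j (by omega), hagree j hj]
    · intro i' hi'
      rcases Nat.lt_or_ge i' (i+1) with h | h
      · exact hs'2 i' (by omega)
      · have hi'' : i' = i + 1 := by omega
        subst hi''
        have hseg' : seg s' n (i+2) = seg s n (i+2) := by
          rw [seg_congr (t := Function.update s (i+1) a)
            (fun j hj => hs'1 j (by omega)), hseg2]
        refine ⟨by rw [hseg']; exact hs, ?_⟩
        rw [hseg', hs'1 (i+1) le_rfl, Function.update_self]
        exact ha1

/-- Lemma `cond_union`: if `q ⪯ᵢ p` and `r ⪯ p` with `r↾_{i+1} p = p`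
(`r` agrees with `p` on `χ` and on all levels `≤ i+1`), then the amalgam `q ∪ r` —
`χ` from `q`, levels `≤ i` from `q`, levels `> i` from `r` — is again a condition. -/
theorem stmt16 (n i : ℕ) (p q r : GCond n)
    (hq : q.leAt p i) (hr : r.le p)
    (hrestr : r.χ = p.χ ∧ ∀ j ≤ i + 1, r.I j = p.I j ∧ r.V j = p.V j) :
    ∃ u : GCond n, u.χ = q.χ ∧
      (∀ j ≤ i, u.I j = q.I j ∧ u.V j = q.V j) ∧
      ∀ j, i < j → u.I j = r.I j ∧ u.V j = r.V j := by
  obtain ⟨⟨hqχ, hqIV⟩, hqhigh⟩ := hq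
  obtain ⟨hrχ, hrIV⟩ := hr
  obtain ⟨hrxχ, hrlow⟩ := hrestr
  -- the amalgam's data
  set uI : ℕ → Set (List ℕ) := fun j => if j ≤ i then q.I j else r.I j with huI
  set uV : ℕ → List ℕ → ℕ := fun j => if j ≤ i then q.V j else r.V j with huV
  have huIle : ∀ j, j ≤ i → uI j = q.I j := fun j hj => by simp [huI, hj]
  have huVle : ∀ j, j ≤ i → uV j = q.V j := fun j hj => by simp [huV, hj]
  have huIgt : ∀ j, i < j → uI j = r.I j := fun j hj => by
    simp [huI, Nat.not_le.mpr hj]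
  have huVgt : ∀ j, i < j → uV j = r.V j := fun j hj => by
    simp [huV, Nat.not_le.mpr hj]
  -- conversion: u-convergence up to a level ≤ i gives q-convergence
  have convq : ∀ (s : ℕ → ℕ) (m' : ℕ), m' ≤ i → m' + 1 ≤ n →
      ConvFrom n uI uV s m' → ConvFrom n q.I q.V s m' := by
    intro s m' hm'i hm'n hconv i' hi'
    obtain ⟨h1, h2⟩ := hconv i' hi'
    by_cases hc : i' + 1 ≤ i
    · rw [huIle _ hc] at h1
      rw [huVle _ hc] at h2
      exact ⟨h1, h2⟩
    · have he : i' + 1 = i + 1 := by omega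
      rw [huIgt _ (by omega), he, (hrlow (i+1) le_rfl).1] at h1
      rw [huVgt _ (by omega), he, (hrlow (i+1) le_rfl).2] at h2
      obtain ⟨hsub, hVeq⟩ := hqIV (i+1) (by omega) (by omega)
      rw [he]
      exact ⟨hsub h1, by rw [hVeq _ h1]; exact h2⟩
  -- conversion: p-convergence gives q-convergence
  have convpq : ∀ (w : ℕ → ℕ) (m' : ℕ), m' + 1 ≤ n →
      ConvFrom n p.I p.V w m' → ConvFrom n q.I q.V w m' := by
    intro w m' hm'n hw i' hi'
    obtain ⟨h1, h2⟩ := hw i' hi'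
    obtain ⟨hsub, hVeq⟩ := hqIV (i'+1) (by omega) (by omega)
    exact ⟨hsub h1, by rw [hVeq _ h1]; exact h2⟩
  -- realization
  have hreal : ∀ i', 1 < i' → i' ≤ n → ∀ t ∈ uI i',
      ∃ s, uV i' t ≤ s ∧ t ++ [s] ∈ uI (i' - 1) := by
    intro i' h1 h2 t ht
    rcases Nat.lt_trichotomy i' (i+1) with hc | hc | hc
    · -- i' ≤ i
      rw [huIle _ (by omega)] at ht
      obtain ⟨a, ha1, ha2⟩ := q.real i' h1 h2 t ht
      exact ⟨a, by rw [huVle _ (by omega)]; exact ha1,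
        by rw [huIle _ (by omega)]; exact ha2⟩
    · -- i' = i + 1
      subst hc
      rw [huIgt _ (by omega), (hrlow (i+1) le_rfl).1] at ht
      obtain ⟨a, ha1, ha2⟩ := p.real (i+1) h1 h2 t ht
      refine ⟨a, ?_, ?_⟩
      · rw [huVgt _ (by omega), (hrlow (i+1) le_rfl).2]; exact ha1
      · have hi1 : i + 1 - 1 = i := by omega
        rw [hi1] at ha2 ⊢
        rw [huIle _ le_rfl]
        exact (hqIV i (by omega) (by omega)).1 ha2
    · -- i' > i + 1
      rw [huIgt _ (by omega)] at ht
      obtain ⟨a, ha1, ha2⟩ := r.real i' h1 h2 t ht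
      exact ⟨a, by rw [huVgt _ (by omega)]; exact ha1,
        by rw [huIgt _ (by omega)]; exact ha2⟩
  -- realization at level 1
  have hreal1 : ∀ t ∈ uI 1, ∃ s, uV 1 t ≤ s ∧ q.χ (t ++ [s]) ≠ none := by
    intro t ht
    by_cases h1 : 1 ≤ i
    · rw [huIle _ h1] at ht
      obtain ⟨a, ha1, ha2⟩ := q.real1 t ht
      exact ⟨a, by rw [huVle _ h1]; exact ha1, ha2⟩
    · have hi0 : i = 0 := by omega
      rw [huIgt _ (by omega), (hrlow 1 (by omega)).1] at ht
      obtain ⟨a, ha1, ha2⟩ := p.real1 t ht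
      obtain ⟨b, hb⟩ := Option.ne_none_iff_exists'.mp ha2
      refine ⟨a, ?_, ?_⟩
      · rw [huVgt _ (by omega), (hrlow 1 (by omega)).2]; exact ha1
      · rw [hqχ _ _ hb]; simp
  -- coherence
  have hcoh : ∀ m < n, ∀ s t : ℕ → ℕ, (∀ j, m + 1 ≤ j → j ≤ n → s j = t j) →
      ConvFrom n uI uV s m → ConvFrom n uI uV t m →
      ∀ b b', q.χ (seg s n 0) = some b → q.χ (seg t n 0) = some b' → b = b' := by
    intro m hm s t hst hs ht b b' hb hb'
    rcases le_or_gt m i with hmi | hmi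
    · exact q.coh m hm s t hst (convq s m hmi (by omega) hs)
        (convq t m hmi (by omega) ht) b b' hb hb'
    · -- i < m
      have hin : i + 1 ≤ n := by omega
      have hsI : seg s n (i+1) ∈ p.I (i+1) := by
        have h1 := (hs i (by omega)).1
        rwa [huIgt _ (by omega), (hrlow (i+1) le_rfl).1] at h1
      have htI : seg t n (i+1) ∈ p.I (i+1) := by
        have h1 := (ht i (by omega)).1
        rwa [huIgt _ (by omega), (hrlow (i+1) le_rfl).1] at h1
      obtain ⟨s', hs'agree, hs'conv, bs, hbs⟩ := descent p i hin s hsI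
      obtain ⟨t', ht'agree, ht'conv, bt, hbt⟩ := descent p i hin t htI
      -- u-convergence of s, t from i gives q-convergence from i
      have hsq : ConvFrom n q.I q.V s i :=
        convq s i le_rfl hin (fun i' hi' => hs i' (by omega))
      have htq : ConvFrom n q.I q.V t i :=
        convq t i le_rfl hin (fun i' hi' => ht i' (by omega))
      have hb_bs : b = bs :=
        q.coh i (by omega) s s' (fun j hj1 _ => (hs'agree j hj1).symm)
          hsq (convpq s' i hin hs'conv) b bs hb (hqχ _ _ hbs)
      have hb'_bt : b' = bt :=
        q.coh i (by omega) t t' (fun j hj1 _ => (ht'agree j hj1).symm)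
          htq (convpq t' i hin ht'conv) b' bt hb' (hqχ _ _ hbt)
      -- s', t' are r-convergent from m
      have convr : ∀ (w w' : ℕ → ℕ), (∀ j, i + 1 ≤ j → w' j = w j) →
          ConvFrom n uI uV w m → ConvFrom n p.I p.V w' i →
          ConvFrom n r.I r.V w' m := by
        intro w w' hagree hw hw' i' hi'
        rcases le_or_gt (i'+1) (i+1) with hc | hc
        · obtain ⟨h1, h2⟩ := hw' i' (by omega)
          exact ⟨by rw [(hrlow _ hc).1]; exact h1,
            by rw [(hrlow _ hc).2]; exact h2⟩
        · obtain ⟨h1, h2⟩ := hw i' hi'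
          rw [huIgt _ (by omega)] at h1
          rw [huVgt _ (by omega)] at h2
          have hseg : seg w' n (i'+1) = seg w n (i'+1) :=
            seg_congr fun j hj => hagree j (by omega)
          rw [hseg]
          exact ⟨h1, by rw [hagree i' (by omega)]; exact h2⟩
      have hbs_bt : bs = bt := by
        refine r.coh m hm s' t' (fun j hj1 hj2 => ?_)
          (convr s s' hs'agree hs hs'conv) (convr t t' ht'agree ht ht'conv)
          bs bt ?_ ?_
        · rw [hs'agree j (by omega), ht'agree j (by omega)]
          exact hst j hj1 hj2
        · rw [hrxχ]; exact hbs
        · rw [hrxχ]; exact hbt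
      rw [hb_bs, hb'_bt, hbs_bt]
  refine ⟨⟨q.χ, uI, uV, hreal, hreal1, hcoh⟩, rfl, ?_, ?_⟩
  · intro j hj
    exact ⟨huIle j hj, huVle j hj⟩
  · intro j hj
    exact ⟨huIgt j hj, huVgt j hj⟩
end
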